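/- Let G be a group generated by S such that for every c, d ∈ S, the element c⁻¹d belongs to the future causal subgroup S^(0)_+. Then S^(0)_+ = S^(0), i.e., the Cayley graph Γ(G,S) is nonseparating. -/

import Mathlib

/-!
Conjugating a generator `u w` (`u ∈ Sⁿ⁺¹`, `w ∈ S⁻ⁿ⁻¹`) of `S⁽⁰⁾₊` by `a ∈ S` gives the generator
`(a u)(w a⁻¹)`. Conjugating it by `a⁻¹` instead, split `u = b u'` and `w = w' c⁻¹` with `b, c ∈ S`:
then `a⁻¹ u w a = (a⁻¹ b)(u' w')(a⁻¹ c)⁻¹`, a product of elements of `S⁽⁰⁾₊` by the hypothesis.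
So `S⁽⁰⁾₊` is normalized by the generating set `S`, hence normal, and then each generator
`w u ∈ S⁻ⁿ Sⁿ` of `S⁽⁰⁾` is the conjugate `w (u w) w⁻¹` of an element of `S⁽⁰⁾₊`.
-/

open Pointwise

/-- The future causal subgroup `S⁽⁰⁾₊`, generated by `⋃_{n ≥ 1} Sⁿ S⁻ⁿ`. -/
def futureCausalSubgroup {G : Type*} [Group G] (S : Set G) : Subgroup G :=
  Subgroup.closure (⋃ n : ℕ, S ^ (n + 1) * S⁻¹ ^ (n + 1))

/-- The causal subgroup `S⁽⁰⁾`, generated by `⋃_{n ∈ ℤ} Sⁿ S⁻ⁿ`, i.e. by all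
products `Sⁿ S⁻ⁿ` (for `n ≥ 0`) together with all products `S⁻ⁿ Sⁿ`
(corresponding to negative `n`). -/
def fullCausalSubgroup {G : Type*} [Group G] (S : Set G) : Subgroup G :=
  Subgroup.closure ((⋃ n : ℕ, S ^ n * S⁻¹ ^ n) ∪ (⋃ n : ℕ, S⁻¹ ^ n * S ^ n))

namespace Subgroup

variable {G : Type*} [Group G] {T : Set G} {a : G}

theorem conj_mem_closure_of_forall_conj_mem (hT : ∀ x ∈ T, a * x * a⁻¹ ∈ closure T) {x : G}
    (hx : x ∈ closure T) : a * x * a⁻¹ ∈ closure T :=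
  (closure_le ((closure T).comap (MulAut.conj a).toMonoidHom)).2 hT hx

theorem mem_normalizer_closure_of_forall_conj_mem (hT : ∀ x ∈ T, a * x * a⁻¹ ∈ closure T)
    (hT' : ∀ x ∈ T, a⁻¹ * x * a ∈ closure T) : a ∈ normalizer (closure T : Set G) := by
  refine mem_normalizer_iff.2 fun x => ⟨conj_mem_closure_of_forall_conj_mem hT, fun hx => ?_⟩
  have := conj_mem_closure_of_forall_conj_mem (a := a⁻¹) (by simpa using hT') hx
  simpa [mul_assoc] using this

end Subgroup

section CausalSubgroup

variable {G : Type*} [Group G] {S : Set G}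

theorem pow_mul_inv_pow_subset_futureCausalSubgroup (n : ℕ) :
    S ^ n * S⁻¹ ^ n ⊆ futureCausalSubgroup S := by
  cases n with
  | zero => simp [(futureCausalSubgroup S).one_mem]
  | succ n =>
    exact (Set.subset_iUnion (fun n => S ^ (n + 1) * S⁻¹ ^ (n + 1)) n).trans Subgroup.subset_closure

theorem conj_mem_futureCausalSubgroup {a : G} (ha : a ∈ S) {n : ℕ} {x : G}
    (hx : x ∈ S ^ (n + 1) * S⁻¹ ^ (n + 1)) : a * x * a⁻¹ ∈ futureCausalSubgroup S := by
  obtain ⟨u, hu, w, hw, rfl⟩ := hx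
  have hau : a * u ∈ S ^ (n + 2) := by
    rw [pow_succ']
    exact Set.mul_mem_mul ha hu
  have hwa : w * a⁻¹ ∈ S⁻¹ ^ (n + 2) := by
    rw [pow_succ]
    exact Set.mul_mem_mul hw (Set.inv_mem_inv.2 ha)
  rw [show a * (u * w) * a⁻¹ = (a * u) * (w * a⁻¹) by group]
  exact pow_mul_inv_pow_subset_futureCausalSubgroup (n + 2) (Set.mul_mem_mul hau hwa)

theorem inv_conj_mem_futureCausalSubgroup
    (h : ∀ c ∈ S, ∀ d ∈ S, c⁻¹ * d ∈ futureCausalSubgroup S) {a : G} (ha : a ∈ S) {n : ℕ}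
    {x : G} (hx : x ∈ S ^ (n + 1) * S⁻¹ ^ (n + 1)) : a⁻¹ * x * a ∈ futureCausalSubgroup S := by
  rw [pow_succ', pow_succ] at hx
  obtain ⟨_, ⟨b, hb, u, hu, rfl⟩, _, ⟨w, hw, c, hc, rfl⟩, rfl⟩ := hx
  have hmid := pow_mul_inv_pow_subset_futureCausalSubgroup n (Set.mul_mem_mul hu hw)
  rw [show a⁻¹ * (b * u * (w * c)) * a = (a⁻¹ * b) * (u * w) * (a⁻¹ * c⁻¹)⁻¹ by group]
  exact (futureCausalSubgroup S).mul_mem ((futureCausalSubgroup S).mul_mem (h a ha b hb) hmid)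
    ((futureCausalSubgroup S).inv_mem (h a ha c⁻¹ hc))

theorem futureCausalSubgroup_normal (hgen : Subgroup.closure S = ⊤)
    (h : ∀ c ∈ S, ∀ d ∈ S, c⁻¹ * d ∈ futureCausalSubgroup S) :
    (futureCausalSubgroup S).Normal := by
  rw [← Subgroup.normalizer_eq_top_iff, eq_top_iff, ← hgen, Subgroup.closure_le]
  intro a ha
  apply Subgroup.mem_normalizer_closure_of_forall_conj_mem
  · rintro _ ⟨_, ⟨n, rfl⟩, hx⟩
    exact conj_mem_futureCausalSubgroup ha hx
  · rintro _ ⟨_, ⟨n, rfl⟩, hx⟩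
    exact inv_conj_mem_futureCausalSubgroup h ha hx

theorem inv_pow_mul_pow_subset_futureCausalSubgroup (hnormal : (futureCausalSubgroup S).Normal)
    (n : ℕ) : S⁻¹ ^ n * S ^ n ⊆ futureCausalSubgroup S := by
  rintro _ ⟨w, hw, u, hu, rfl⟩
  have := hnormal.conj_mem _ (pow_mul_inv_pow_subset_futureCausalSubgroup n
    (Set.mul_mem_mul hu hw)) w
  simpa only [SetLike.mem_coe, mul_assoc, mul_inv_cancel, mul_one] using this

theorem futureCausalSubgroup_le_fullCausalSubgroup :
    futureCausalSubgroup S ≤ fullCausalSubgroup S :=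
  Subgroup.closure_mono <| Set.iUnion_subset fun n =>
    (Set.subset_iUnion (fun n => S ^ n * S⁻¹ ^ n) (n + 1)).trans Set.subset_union_left

end CausalSubgroup

theorem nonseparating_of_invMulGen_general {G : Type*} [Group G] (S : Set G)
    (hgen : Subgroup.closure S = ⊤)
    (h : ∀ c ∈ S, ∀ d ∈ S, c⁻¹ * d ∈ futureCausalSubgroup S) :
    futureCausalSubgroup S = fullCausalSubgroup S := by
  have hnormal := futureCausalSubgroup_normal hgen h
  refine le_antisymm futureCausalSubgroup_le_fullCausalSubgroup ?_
  refine (Subgroup.closure_le _).2 (Set.union_subset ?_ ?_)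
  · exact Set.iUnion_subset pow_mul_inv_pow_subset_futureCausalSubgroup
  · exact Set.iUnion_subset (inv_pow_mul_pow_subset_futureCausalSubgroup hnormal)

/-- If for every `c, d ∈ S` the element `c⁻¹ d` lies in the future causal
subgroup `S⁽⁰⁾₊`, then `S⁽⁰⁾₊ = S⁽⁰⁾`: the Cayley graph `Γ(G,S)` is
nonseparating. -/
theorem nonseparating_of_invMulGen {G : Type*} [Group G] (S : Set G)
    (hfin : S.Finite) (hgen : Subgroup.closure S = ⊤)
    (h : ∀ c ∈ S, ∀ d ∈ S, c⁻¹ * d ∈ futureCausalSubgroup S) :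
    futureCausalSubgroup S = fullCausalSubgroup S :=
  nonseparating_of_invMulGen_general S hgen h
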